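/- arXiv:q-alg/9603033 — 4 statements merged into one kernel-verified Lean document; each statement's English description precedes it below -/
import Mathlib

section
/- For p ≥ 2, the ordered product R(u₁,…,u_p) = (R_{p−1,p})(R_{p−2,p}R_{p−2,p−1})⋯(R_{1,p}R_{1,p−1}⋯R_{1,2}) of unnormalized Yang R-matrices Ř_{i,j}(u_i−u_j) = I + ħ𝒫_{i,j}/(u_i−u_j), evaluated at the special points u_i − u_{i+1} = −ħ for all 1 ≤ i < p, equals the total antisymmetrizer a_p = Σ_{σ∈S_p} sgn(σ)·σ acting on V^{⊗p}. -/
open Matrix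

variable (K : Type*) [Field K]

/-- The matrix of the action of a permutation `σ ∈ S_p` on `V^{⊗p}`, `V = K^n`,
permuting the tensor factors. -/
def permMx (n p : ℕ) (σ : Equiv.Perm (Fin p)) :
    Matrix (Fin p → Fin n) (Fin p → Fin n) K :=
  Matrix.of fun a b => if a = b ∘ σ then 1 else 0

/-- The transposition `𝒫_{i,j}` of the `i`-th and `j`-th tensor factors. -/
def transpMx (n p : ℕ) (i j : Fin p) :
    Matrix (Fin p → Fin n) (Fin p → Fin n) K :=
  permMx K n p (Equiv.swap i j)

/-- The unnormalized Yang R-matrix `R_{i,j}(u) = I + (hbar/u)·𝒫_{i,j}`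
acting on the `i`-th and `j`-th factors of `V^{⊗p}`. -/
noncomputable def Rij (n p : ℕ) (hbar : K) (i j : Fin p) (u : K) :
    Matrix (Fin p → Fin n) (Fin p → Fin n) K :=
  1 + (hbar / u) • transpMx K n p i j

/-- The total antisymmetrizer `a_p = Σ_{σ∈S_p} sgn(σ)·σ` on `V^{⊗p}`. -/
noncomputable def antisymmetrizer (n p : ℕ) :
    Matrix (Fin p → Fin n) (Fin p → Fin n) K :=
  ∑ σ : Equiv.Perm (Fin p), ((Equiv.Perm.sign σ : ℤ) : K) • permMx K n p σ

/-- The ordered product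
`R(u₁,…,u_p) = (R_{p−1,p})(R_{p−2,p} R_{p−2,p−1})⋯(R_{1,p} R_{1,p−1}⋯R_{1,2})`
(with rows `i` here 0-indexed: the block of row `i` is `R_{i,p-1} ⋯ R_{i,i+1}`,
0-indexed, multiplied from `j = p-1` down to `j = i+1`). -/
noncomputable def orderedRProd (n p : ℕ) (hbar : K) (u : Fin p → K) :
    Matrix (Fin p → Fin n) (Fin p → Fin n) K :=
  (((List.range (p - 1)).reverse).map (fun i =>
    ((((List.range (p - 1 - i)).reverse).map (fun t =>
      if hij : i < p ∧ t + i + 1 < p then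
        Rij K n p hbar ⟨i, hij.1⟩ ⟨t + i + 1, hij.2⟩ (u ⟨i, hij.1⟩ - u ⟨t + i + 1, hij.2⟩)
      else 1)).prod))).prod

lemma permMx_mul (n p : ℕ) (σ τ : Equiv.Perm (Fin p)) :
    permMx K n p σ * permMx K n p τ = permMx K n p (τ * σ) := by
  ext a c
  simp only [permMx, Matrix.mul_apply, Matrix.of_apply]
  rw [Finset.sum_eq_single (c ∘ τ)]
  · simp [Function.comp_assoc]; rfl
  · intro b _ hb; simp [hb]
  · simp

lemma permMx_one (n p : ℕ) : permMx K n p 1 = 1 := by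
  ext a b
  simp [permMx, Matrix.one_apply, eq_comm]

def sgnK (p : ℕ) (σ : Equiv.Perm (Fin p)) : K := ((Equiv.Perm.sign σ : ℤ) : K)

lemma sgnK_mul (p : ℕ) (σ τ : Equiv.Perm (Fin p)) :
    sgnK K p (σ * τ) = sgnK K p σ * sgnK K p τ := by
  simp [sgnK]

lemma sgnK_sq (p : ℕ) (σ : Equiv.Perm (Fin p)) : sgnK K p σ * sgnK K p σ = 1 := by
  unfold sgnK
  rcases Int.units_eq_one_or (Equiv.Perm.sign σ) with h | h <;> rw [h] <;> norm_num

def Hs (p m : ℕ) : Finset (Equiv.Perm (Fin p)) :=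
  Finset.univ.filter (fun σ => ∀ i : Fin p, (i : ℕ) < m → σ i = i)

lemma mem_Hs (p m : ℕ) (σ : Equiv.Perm (Fin p)) :
    σ ∈ Hs p m ↔ ∀ i : Fin p, (i : ℕ) < m → σ i = i := by
  simp [Hs]

noncomputable def Amx (n p m : ℕ) : Matrix (Fin p → Fin n) (Fin p → Fin n) K :=
  ∑ σ ∈ Hs p m, sgnK K p σ • permMx K n p σ

lemma Amx_mul_perm (n p m : ℕ) (τ : Equiv.Perm (Fin p)) (hτ : τ ∈ Hs p m) :
    Amx K n p m * permMx K n p τ = sgnK K p τ • Amx K n p m := by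
  rw [Amx, Finset.sum_mul, Finset.smul_sum]
  refine Finset.sum_equiv (Equiv.mulLeft τ) ?_ ?_
  · intro σ
    rw [mem_Hs] at hτ
    simp only [mem_Hs, Equiv.coe_mulLeft]
    constructor
    · intro h i hi
      simp [Equiv.Perm.mul_apply, h i hi, hτ i hi]
    · intro h i hi
      have := h i hi
      rw [Equiv.Perm.mul_apply] at this
      have h2 : τ (σ i) = τ i := by rw [this, hτ i hi]
      exact τ.injective h2
  · intro σ _
    rw [smul_mul_assoc, permMx_mul, smul_smul]
    show sgnK K p σ • permMx K n p (τ * σ)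
        = (sgnK K p τ * sgnK K p (τ * σ)) • permMx K n p (τ * σ)
    congr 1
    rw [sgnK_mul, ← mul_assoc, sgnK_sq, one_mul]

lemma Amx_coset (n p m : ℕ) (hm : m < p) :
    Amx K n p m = Amx K n p (m + 1)
      - ∑ j ∈ Finset.univ.filter (fun j : Fin p => m < (j : ℕ)),
          Amx K n p (m + 1) * transpMx K n p ⟨m, hm⟩ j := by
  have key : Amx K n p m
      = (∑ σ ∈ (Hs p m).filter (fun σ => σ ⟨m, hm⟩ = ⟨m, hm⟩), sgnK K p σ • permMx K n p σ)
      + ∑ σ ∈ (Hs p m).filter (fun σ => ¬ σ ⟨m, hm⟩ = ⟨m, hm⟩), sgnK K p σ • permMx K n p σ := by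
    rw [Amx, Finset.sum_filter_add_sum_filter_not]
  have hset : (Hs p m).filter (fun σ => σ ⟨m, hm⟩ = ⟨m, hm⟩) = Hs p (m + 1) := by
    ext σ
    simp only [Finset.mem_filter, mem_Hs]
    constructor
    · rintro ⟨h1, h2⟩ i hi
      rcases Nat.lt_or_ge (i : ℕ) m with h | h
      · exact h1 i h
      · have : i = (⟨m, hm⟩ : Fin p) := by
          apply Fin.ext; show (i : ℕ) = m; omega
        rw [this, h2]
    · intro h
      exact ⟨fun i hi => h i (by omega), h ⟨m, hm⟩ (Nat.lt_succ_self m)⟩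
  have hmaps : ∀ σ ∈ (Hs p m).filter (fun σ => ¬ σ ⟨m, hm⟩ = ⟨m, hm⟩),
      σ ⟨m, hm⟩ ∈ Finset.univ.filter (fun j : Fin p => m < (j : ℕ)) := by
    intro σ hσ
    simp only [Finset.mem_filter, mem_Hs] at hσ
    simp only [Finset.mem_filter, Finset.mem_univ, true_and]
    rcases Nat.lt_or_ge m ((σ ⟨m, hm⟩ : Fin p) : ℕ) with h | h
    · exact h
    · exfalso
      rcases Nat.lt_or_ge ((σ ⟨m, hm⟩ : Fin p) : ℕ) m with h2 | h2
      · have h3 := hσ.1 (σ ⟨m, hm⟩) h2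
        have h4 := σ.injective h3
        rw [h4] at h2
        exact absurd h2 (lt_irrefl m)
      · exact hσ.2 (by apply Fin.ext; show _ = m; omega)
  have hmove : ∑ σ ∈ (Hs p m).filter (fun σ => ¬ σ ⟨m, hm⟩ = ⟨m, hm⟩), sgnK K p σ • permMx K n p σ
      = - ∑ j ∈ Finset.univ.filter (fun j : Fin p => m < (j : ℕ)),
          Amx K n p (m + 1) * transpMx K n p ⟨m, hm⟩ j := by
    rw [← Finset.sum_fiberwise_of_maps_to hmaps, ← Finset.sum_neg_distrib]
    refine Finset.sum_congr rfl ?_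
    intro j hj
    simp only [Finset.mem_filter, Finset.mem_univ, true_and] at hj
    have hmj : (⟨m, hm⟩ : Fin p) ≠ j := by
      intro h; rw [← h] at hj; exact absurd hj (lt_irrefl m)
    rw [Amx, Finset.sum_mul, ← Finset.sum_neg_distrib]
    refine Finset.sum_equiv (Equiv.mulLeft (Equiv.swap ⟨m, hm⟩ j)) ?_ ?_
    · intro σ
      simp only [Finset.mem_filter, mem_Hs, Equiv.coe_mulLeft]
      constructor
      · rintro ⟨⟨h1, _⟩, h2⟩ i hi
        rcases Nat.lt_or_ge (i : ℕ) m with h | h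
        · rw [Equiv.Perm.mul_apply, h1 i h, Equiv.swap_apply_of_ne_of_ne]
          · intro he; rw [he] at h; exact absurd h (lt_irrefl m)
          · intro he; rw [he] at h; omega
        · have hi' : i = (⟨m, hm⟩ : Fin p) := by apply Fin.ext; show _ = m; omega
          rw [hi', Equiv.Perm.mul_apply, h2, Equiv.swap_apply_right]
      · intro h
        have hrec : ∀ i : Fin p, σ i = Equiv.swap (⟨m, hm⟩ : Fin p) j
            ((Equiv.swap (⟨m, hm⟩ : Fin p) j * σ) i) := by
          intro i
          rw [Equiv.Perm.mul_apply, Equiv.swap_apply_self]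
        have hm2 : σ ⟨m, hm⟩ = j := by
          rw [hrec ⟨m, hm⟩, h ⟨m, hm⟩ (Nat.lt_succ_self m), Equiv.swap_apply_left]
        refine ⟨⟨?_, ?_⟩, ?_⟩
        · intro i hi
          rw [hrec i, h i (by omega), Equiv.swap_apply_of_ne_of_ne]
          · intro he; rw [he] at hi; exact absurd hi (Nat.lt_irrefl m)
          · intro he; rw [he] at hi; omega
        · rw [hm2]; exact fun he => hmj he.symm
        · exact hm2
    · intro σ hσ
      simp only [Equiv.coe_mulLeft]
      have hs : sgnK K p (Equiv.swap (⟨m, hm⟩ : Fin p) j) = -1 := by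
        unfold sgnK
        rw [Equiv.Perm.sign_swap hmj]; norm_num
      rw [smul_mul_assoc, transpMx, permMx_mul, ← mul_assoc, Equiv.swap_mul_self, one_mul,
        sgnK_mul, hs, neg_one_mul, neg_smul, neg_neg]
  rw [key, hset, hmove]
  show Amx K n p (m + 1) + _ = _
  rw [← sub_eq_add_neg]

lemma swap_swap_eq {α : Type*} [DecidableEq α] (a b c : α)
    (hab : a ≠ b) (hac : a ≠ c) (hbc : b ≠ c) :
    Equiv.swap a c * Equiv.swap a b = Equiv.swap a b * Equiv.swap b c := by
  ext x
  simp only [Equiv.Perm.mul_apply, Equiv.swap_apply_def]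
  split_ifs <;> simp_all

lemma absorb_T (n p m : ℕ) (hmp : m < p) (j k : Fin p)
    (hmk : m < (k : ℕ)) (hkj : (k : ℕ) < (j : ℕ)) :
    Amx K n p (m + 1) * transpMx K n p ⟨m, hmp⟩ j * transpMx K n p ⟨m, hmp⟩ k
      = -(Amx K n p (m + 1) * transpMx K n p ⟨m, hmp⟩ j) := by
  have hmj' : (⟨m, hmp⟩ : Fin p) ≠ j := by
    intro h
    have : (j : ℕ) = m := by rw [← h]
    omega
  have hmk' : (⟨m, hmp⟩ : Fin p) ≠ k := by
    intro h
    have : (k : ℕ) = m := by rw [← h]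
    omega
  have hjk' : j ≠ k := by
    intro h; rw [h] at hkj; omega
  have step : transpMx K n p ⟨m, hmp⟩ j * transpMx K n p ⟨m, hmp⟩ k
      = permMx K n p (Equiv.swap j k) * transpMx K n p ⟨m, hmp⟩ j := by
    rw [transpMx, transpMx, permMx_mul, permMx_mul,
      swap_swap_eq _ j k hmj' hmk' hjk']
  rw [mul_assoc, step, ← mul_assoc]
  have hswap : Equiv.swap j k ∈ Hs p (m + 1) := by
    rw [mem_Hs]
    intro i hi
    apply Equiv.swap_apply_of_ne_of_ne
    · intro h; rw [h] at hi; omega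
    · intro h; rw [h] at hi; omega
  rw [Amx_mul_perm K n p (m+1) _ hswap]
  have hs : sgnK K p (Equiv.swap j k) = -1 := by
    unfold sgnK
    rw [Equiv.Perm.sign_swap hjk']; norm_num
  rw [hs, neg_one_smul, neg_mul]

def revRangeProd {M : Type*} [Monoid M] (f : ℕ → M) : ℕ → M
  | 0 => 1
  | N + 1 => f N * revRangeProd f N

lemma revRangeProd_eq_list {M : Type*} [Monoid M] (f : ℕ → M) (N : ℕ) :
    ((List.range N).reverse.map f).prod = revRangeProd f N := by
  induction N with
  | zero => simp [revRangeProd]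
  | succ N ih =>
    rw [List.range_succ]
    simp only [List.reverse_append, List.reverse_cons, List.reverse_nil, List.nil_append,
      List.singleton_append, List.map_cons, List.prod_cons]
    rw [ih]
    rfl

lemma revRangeProd_succ' {M : Type*} [Monoid M] (f : ℕ → M) (N : ℕ) :
    revRangeProd f (N + 1) = revRangeProd (fun t => f (t + 1)) N * f 0 := by
  induction N generalizing f with
  | zero =>
    show f 0 * 1 = 1 * f 0
    rw [one_mul, mul_one]
  | succ N ih =>
    have h1 : revRangeProd f (N + 1 + 1) = f (N + 1) * revRangeProd f (N + 1) := rfl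
    have h2 : revRangeProd (fun t => f (t + 1)) (N + 1)
        = f (N + 1) * revRangeProd (fun t => f (t + 1)) N := rfl
    rw [h1, ih f, h2, ← mul_assoc]

noncomputable def RRg (n p : ℕ) (hbar : K) (u : Fin p → K) (m j : ℕ) :
    Matrix (Fin p → Fin n) (Fin p → Fin n) K :=
  if h : m < p ∧ j < p then
    Rij K n p hbar ⟨m, h.1⟩ ⟨j, h.2⟩ (u ⟨m, h.1⟩ - u ⟨j, h.2⟩) else 1

lemma hdiff (p : ℕ) (hbar : K) (u : Fin p → K)
    (hu : ∀ i : Fin p, ∀ h : i.val + 1 < p, u i - u ⟨i.val + 1, h⟩ = -hbar) :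
    ∀ (m k : ℕ) (hm : m < p) (hk : k < p), m ≤ k →
      u ⟨m, hm⟩ - u ⟨k, hk⟩ = -(((k - m : ℕ) : K) * hbar) := by
  intro m k hm
  induction k with
  | zero =>
    intro hk hmk
    have : m = 0 := by omega
    subst this
    simp
  | succ k ih =>
    intro hk hmk
    rcases Nat.lt_or_ge m (k + 1) with h | h
    · have hmk' : m ≤ k := by omega
      have hkp : k < p := by omega
      have h1 := ih hkp hmk'
      have h2 := hu ⟨k, hkp⟩ hk
      have h3 : u ⟨m, hm⟩ - u ⟨k+1, hk⟩
          = (u ⟨m, hm⟩ - u ⟨k, hkp⟩) + (u ⟨k, hkp⟩ - u ⟨k+1, hk⟩) := by ring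
      rw [h3, h1, h2]
      have h4 : ((k + 1 - m : ℕ) : K) = ((k - m : ℕ) : K) + 1 := by
        have : k + 1 - m = (k - m) + 1 := by omega
        rw [this]; push_cast; ring
      rw [h4]; ring
    · have : m = k + 1 := by omega
      subst this
      simp

lemma RRg_eq (n p : ℕ) (hbar : K) (hh : hbar ≠ 0) [CharZero K] (u : Fin p → K)
    (hu : ∀ i : Fin p, ∀ h : i.val + 1 < p, u i - u ⟨i.val + 1, h⟩ = -hbar)
    (m k : ℕ) (hmk : m < k) (hkp : k < p) :
    RRg K n p hbar u m k
      = 1 - (((k - m : ℕ) : K))⁻¹ • transpMx K n p ⟨m, lt_trans hmk hkp⟩ ⟨k, hkp⟩ := by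
  have hmp : m < p := lt_trans hmk hkp
  rw [RRg, dif_pos ⟨hmp, hkp⟩, Rij]
  have hd := hdiff K p hbar u hu m k hmp hkp (le_of_lt hmk)
  have hc : ((k - m : ℕ) : K) ≠ 0 := by
    have : (k - m : ℕ) ≠ 0 := by omega
    exact_mod_cast Nat.cast_ne_zero.mpr this
  rw [hd]
  have : hbar / -(((k - m : ℕ) : K) * hbar) = -(((k - m : ℕ) : K))⁻¹ := by
    field_simp
  rw [this, neg_smul, ← sub_eq_add_neg]

lemma ringlem (n p : ℕ) (A S T : Matrix (Fin p → Fin n) (Fin p → Fin n) K) (c d : K)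
    (habs : A * S * T = -(A * S)) (hco : c + d * c = d) :
    A * (1 - c • S) * (1 - d • T) = A * (1 - d • (T + S)) := by
  have h1 : A * (1 - c • S) = A - c • (A * S) := by
    rw [mul_sub, mul_one, mul_smul_comm]
  rw [h1]
  have h2 : A * (1 - d • (T + S)) = A - d • (A * T) - d • (A * S) := by
    rw [mul_sub, mul_one, mul_smul_comm, mul_add, smul_add]
    abel
  rw [h2]
  have h3 : (A - c • (A * S)) * (1 - d • T)
      = A - d • (A * T) - (c • (A * S) + (d * c) • (A * S)) := by
    simp only [sub_mul, mul_sub, mul_one, one_mul, smul_mul_assoc, mul_smul_comm, habs,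
      smul_neg, smul_smul, smul_add, smul_sub]
    module
  rw [h3, ← add_smul, hco]

set_option maxHeartbeats 1000000 in
lemma zlemma (n p : ℕ) (hbar : K) (hh : hbar ≠ 0) [CharZero K] (u : Fin p → K)
    (hu : ∀ i : Fin p, ∀ h : i.val + 1 < p, u i - u ⟨i.val + 1, h⟩ = -hbar) :
    ∀ (d m k : ℕ), m < k → k + d = p → ∀ (hmp : m < p),
    Amx K n p (m + 1) * revRangeProd (fun t => RRg K n p hbar u m (t + k)) d
      = Amx K n p (m + 1) * (1 - (((k - m : ℕ) : K))⁻¹ •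
          ∑ j ∈ Finset.univ.filter (fun j : Fin p => k ≤ (j : ℕ)),
            transpMx K n p ⟨m, hmp⟩ j) := by
  intro d
  induction d with
  | zero =>
    intro m k hmk hkd hmp
    have hfilter : Finset.univ.filter (fun j : Fin p => k ≤ (j : ℕ)) = ∅ := by
      ext j
      simp only [Finset.mem_filter, Finset.mem_univ, true_and, Finset.notMem_empty,
        iff_false, not_le]
      omega
    rw [hfilter, Finset.sum_empty, smul_zero, sub_zero]
    rfl
  | succ d ih =>
    intro m k hmk hkd hmp
    have hkp : k < p := by omega
    have peel : revRangeProd (fun t => RRg K n p hbar u m (t + k)) (d + 1)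
        = revRangeProd (fun t => RRg K n p hbar u m (t + (k + 1))) d
          * RRg K n p hbar u m k := by
      rw [revRangeProd_succ']
      congr 1
      · exact congrArg (fun g => revRangeProd g d)
          (funext fun t => by rw [show t + 1 + k = t + (k + 1) from by omega])
      · rw [show 0 + k = k from Nat.zero_add k]
    rw [peel, ← mul_assoc, ih m (k + 1) (by omega) (by omega) hmp,
      RRg_eq K n p hbar hh u hu m k hmk hkp]
    have hins : Finset.univ.filter (fun j : Fin p => k ≤ (j : ℕ))
        = insert (⟨k, hkp⟩ : Fin p)
            (Finset.univ.filter (fun j : Fin p => k + 1 ≤ (j : ℕ))) := by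
      ext j
      simp only [Finset.mem_insert, Finset.mem_filter, Finset.mem_univ, true_and]
      constructor
      · intro h
        rcases Nat.eq_or_lt_of_le h with h2 | h2
        · left; apply Fin.ext; show (j : ℕ) = k; omega
        · right; omega
      · rintro (rfl | h)
        · exact Nat.le_refl k
        · omega
    have hnot : (⟨k, hkp⟩ : Fin p)
        ∉ Finset.univ.filter (fun j : Fin p => k + 1 ≤ (j : ℕ)) := by
      intro hmem
      simp only [Finset.mem_filter, Finset.mem_univ, true_and] at hmem
      have : ((⟨k, hkp⟩ : Fin p) : ℕ) = k := rfl
      omega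
    rw [hins, Finset.sum_insert hnot]
    have habs : Amx K n p (m + 1)
          * (∑ j ∈ Finset.univ.filter (fun j : Fin p => k + 1 ≤ (j : ℕ)),
              transpMx K n p ⟨m, hmp⟩ j)
          * transpMx K n p ⟨m, hmp⟩ ⟨k, hkp⟩
        = -(Amx K n p (m + 1)
          * ∑ j ∈ Finset.univ.filter (fun j : Fin p => k + 1 ≤ (j : ℕ)),
              transpMx K n p ⟨m, hmp⟩ j) := by
      rw [Matrix.mul_sum, Finset.sum_mul, ← Finset.sum_neg_distrib]
      refine Finset.sum_congr rfl ?_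
      intro j hj
      simp only [Finset.mem_filter, Finset.mem_univ, true_and] at hj
      exact absorb_T K n p m hmp j ⟨k, hkp⟩ (show m < k from hmk)
        (show k < (j : ℕ) by omega)
    have hq : ((k - m : ℕ) : K) ≠ 0 := by
      exact_mod_cast Nat.cast_ne_zero.mpr (show (k - m : ℕ) ≠ 0 by omega)
    have hq1 : ((k - m : ℕ) : K) + 1 ≠ 0 := by
      have : (((k - m) + 1 : ℕ) : K) ≠ 0 :=
        Nat.cast_ne_zero.mpr (by omega)
      push_cast at this
      exact this
    have hco : (((k + 1 - m : ℕ) : K))⁻¹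
        + (((k - m : ℕ) : K))⁻¹ * (((k + 1 - m : ℕ) : K))⁻¹ = (((k - m : ℕ) : K))⁻¹ := by
      have h6 : (k + 1 - m : ℕ) = (k - m) + 1 := by omega
      rw [h6]
      push_cast
      field_simp
    exact ringlem K n p _ _ _ _ _ habs hco

lemma orderedRProd_eq (n p : ℕ) (hbar : K) (u : Fin p → K) :
    orderedRProd K n p hbar u
      = revRangeProd (fun i =>
          revRangeProd (fun t => RRg K n p hbar u i (t + i + 1)) (p - 1 - i)) (p - 1) := by
  rw [orderedRProd, revRangeProd_eq_list]
  congr 1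
  funext i
  rw [revRangeProd_eq_list]
  rfl

lemma Amx_zero (n p : ℕ) : Amx K n p 0 = antisymmetrizer K n p := by
  rw [Amx, antisymmetrizer]
  have h : Hs p 0 = Finset.univ := by
    ext σ
    simp [mem_Hs]
  rw [h]
  rfl

lemma Amx_top (n p : ℕ) (hp : 1 ≤ p) : Amx K n p (p - 1) = 1 := by
  have h : Hs p (p - 1) = {1} := by
    ext σ
    simp only [mem_Hs, Finset.mem_singleton]
    constructor
    · intro h
      apply Equiv.ext
      intro i
      have hgoal : σ i = i := by
        rcases Nat.lt_or_ge ((i : Fin p) : ℕ) (p - 1) with h3 | h3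
        · exact h i h3
        · rcases Nat.lt_or_ge ((σ i : Fin p) : ℕ) (p - 1) with h2 | h2
          · exact σ.injective (h (σ i) h2)
          · have hi2 : (i : ℕ) < p := i.isLt
            have hsi : ((σ i : Fin p) : ℕ) < p := (σ i).isLt
            apply Fin.ext
            omega
      simpa using hgoal
    · rintro rfl i hi
      rfl
  rw [Amx, h, Finset.sum_singleton, permMx_one]
  unfold sgnK
  simp

lemma rowlem (n p : ℕ) (hbar : K) (hh : hbar ≠ 0) [CharZero K] (u : Fin p → K)
    (hu : ∀ i : Fin p, ∀ h : i.val + 1 < p, u i - u ⟨i.val + 1, h⟩ = -hbar)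
    (m : ℕ) (hm1 : m + 1 < p) :
    Amx K n p (m + 1)
        * revRangeProd (fun t => RRg K n p hbar u m (t + m + 1)) (p - 1 - m)
      = Amx K n p m := by
  have hmp : m < p := by omega
  have hfun : (fun t => RRg K n p hbar u m (t + m + 1))
      = (fun t => RRg K n p hbar u m (t + (m + 1))) := by
    funext t
    rw [show t + m + 1 = t + (m + 1) from by omega]
  rw [hfun, zlemma K n p hbar hh u hu (p - 1 - m) m (m + 1) (by omega) (by omega) hmp]
  have h1 : ((m + 1 - m : ℕ) : K) = 1 := by
    rw [show m + 1 - m = 1 from by omega]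
    norm_num
  rw [h1, inv_one, one_smul]
  have hfil : Finset.univ.filter (fun j : Fin p => m + 1 ≤ (j : ℕ))
      = Finset.univ.filter (fun j : Fin p => m < (j : ℕ)) := by
    ext j
    simp only [Finset.mem_filter, Finset.mem_univ, true_and]
    omega
  rw [hfil, mul_sub, mul_one, Matrix.mul_sum, Amx_coset K n p m hmp]

lemma outerlem (n p : ℕ) (hbar : K) (hh : hbar ≠ 0) [CharZero K] (u : Fin p → K)
    (hu : ∀ i : Fin p, ∀ h : i.val + 1 < p, u i - u ⟨i.val + 1, h⟩ = -hbar) :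
    ∀ d, d ≤ p - 1 →
      Amx K n p d * revRangeProd (fun i =>
        revRangeProd (fun t => RRg K n p hbar u i (t + i + 1)) (p - 1 - i)) d
      = Amx K n p 0 := by
  intro d
  induction d with
  | zero =>
    intro _
    show Amx K n p 0 * 1 = Amx K n p 0
    rw [mul_one]
  | succ d ih =>
    intro hd
    have hstep : revRangeProd (fun i =>
        revRangeProd (fun t => RRg K n p hbar u i (t + i + 1)) (p - 1 - i)) (d + 1)
      = revRangeProd (fun t => RRg K n p hbar u d (t + d + 1)) (p - 1 - d)
        * revRangeProd (fun i =>
            revRangeProd (fun t => RRg K n p hbar u i (t + i + 1)) (p - 1 - i)) d := rfl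
    rw [hstep, ← mul_assoc, rowlem K n p hbar hh u hu d (by omega), ih (by omega)]

/-- At the special points `u_i − u_{i+1} = −hbar`, the ordered product of Yang
R-matrices equals the total antisymmetrizer `a_p` on `V^{⊗p}`. -/
theorem orderedRProd_eq_antisymmetrizer (n p : ℕ) (hp : 2 ≤ p)
    [CharZero K] (hbar : K) (hh : hbar ≠ 0) (u : Fin p → K)
    (hu : ∀ i : Fin p, ∀ h : i.val + 1 < p, u i - u ⟨i.val + 1, h⟩ = -hbar) :
    orderedRProd K n p hbar u = antisymmetrizer K n p := by
  have h1 := outerlem K n p hbar hh u hu (p - 1) le_rfl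
  rw [Amx_top K n p (by omega)] at h1
  rw [one_mul] at h1
  rw [orderedRProd_eq, h1, Amx_zero]
end

section
/- In the Gauss decomposition T(u) = F(u)K(u)E(u) of an invertible N×N matrix over a (noncommutative) ring, with F lower unitriangular, K diagonal, E upper unitriangular, the diagonal entries satisfy k_p(u) = ([T_{p,p}(u)⁻¹]_{p,p})⁻¹, where T_{p,p}(u) is the leading principal p×p submatrix of T(u) and [M]_{p,p} is the (p,p) entry. -/
open Matrix

/-- The leading principal `(p+1)×(p+1)` submatrix of an `N×N` matrix, for `p : Fin N`. -/
def leadingSub {R : Type*} {N : ℕ} (T : Matrix (Fin N) (Fin N) R) (p : Fin N) :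
    Matrix (Fin (p.val + 1)) (Fin (p.val + 1)) R :=
  T.submatrix (Fin.castLE p.isLt) (Fin.castLE p.isLt)

section aux

variable {R : Type*} [Ring R] {n N : ℕ}

/-- powers of a strictly lower triangular matrix vanish below the shifted diagonal. -/
lemma strict_lower_pow (D : Matrix (Fin n) (Fin n) R)
    (hD : ∀ i j : Fin n, (i : ℕ) ≤ (j : ℕ) → D i j = 0) :
    ∀ k : ℕ, ∀ i j : Fin n, (i : ℕ) < (j : ℕ) + k → (D ^ k) i j = 0 := by
  intro k
  induction k with
  | zero =>
    intro i j h
    have : i ≠ j := by intro e; subst e; omega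
    simp [Matrix.one_apply_ne this]
  | succ k ih =>
    intro i j h
    rw [pow_succ, Matrix.mul_apply]
    apply Finset.sum_eq_zero
    intro a _
    by_cases ha : (a : ℕ) ≤ (j : ℕ)
    · rw [hD a j ha, mul_zero]
    · rw [ih i a (by omega), zero_mul]

/-- powers of a strictly upper triangular matrix vanish. -/
lemma strict_upper_pow (D : Matrix (Fin n) (Fin n) R)
    (hD : ∀ i j : Fin n, (j : ℕ) ≤ (i : ℕ) → D i j = 0) :
    ∀ k : ℕ, ∀ i j : Fin n, (j : ℕ) < (i : ℕ) + k → (D ^ k) i j = 0 := by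
  intro k
  induction k with
  | zero =>
    intro i j h
    have : i ≠ j := by intro e; subst e; omega
    simp [Matrix.one_apply_ne this]
  | succ k ih =>
    intro i j h
    rw [pow_succ, Matrix.mul_apply]
    apply Finset.sum_eq_zero
    intro a _
    by_cases ha : (j : ℕ) ≤ (a : ℕ)
    · rw [hD a j ha, mul_zero]
    · rw [ih i a (by omega), zero_mul]

lemma isUnit_lower_unitriangular (M : Matrix (Fin n) (Fin n) R)
    (hd : ∀ i, M i i = 1) (hu : ∀ i j : Fin n, i < j → M i j = 0) : IsUnit M := by
  have hD : ∀ i j : Fin n, (i : ℕ) ≤ (j : ℕ) → (M - 1) i j = 0 := by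
    intro i j h
    rcases eq_or_lt_of_le h with h | h
    · have : i = j := Fin.ext h
      subst this
      simp [Matrix.sub_apply, hd]
    · have hij : i < j := h
      have : i ≠ j := ne_of_lt hij
      simp [Matrix.sub_apply, hu i j hij, Matrix.one_apply_ne this]
  have hnil : IsNilpotent (M - 1) := by
    refine ⟨n, ?_⟩
    ext i j
    have := strict_lower_pow (M - 1) hD n i j (by omega)
    simpa using this
  have : IsUnit (1 + (M - 1)) := hnil.isUnit_one_add
  simpa using this

lemma isUnit_upper_unitriangular (M : Matrix (Fin n) (Fin n) R)
    (hd : ∀ i, M i i = 1) (hl : ∀ i j : Fin n, j < i → M i j = 0) : IsUnit M := by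
  have hD : ∀ i j : Fin n, (j : ℕ) ≤ (i : ℕ) → (M - 1) i j = 0 := by
    intro i j h
    rcases eq_or_lt_of_le h with h | h
    · have : j = i := Fin.ext h
      subst this
      simp [Matrix.sub_apply, hd]
    · have hij : j < i := h
      have : i ≠ j := (ne_of_lt hij).symm
      simp [Matrix.sub_apply, hl i j hij, Matrix.one_apply_ne this]
  have hnil : IsNilpotent (M - 1) := by
    refine ⟨n, ?_⟩
    ext i j
    have := strict_upper_pow (M - 1) hD n i j (by omega)
    simpa using this
  have : IsUnit (1 + (M - 1)) := hnil.isUnit_one_add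
  simpa using this

/-- The leading submatrix of a product `A * B` with `B` upper triangular. -/
lemma leadingSub_mul (A B : Matrix (Fin N) (Fin N) R) (p : Fin N)
    (hB : ∀ a j : Fin N, j < a → B a j = 0) :
    leadingSub (A * B) p = leadingSub A p * leadingSub B p := by
  ext i j
  simp only [leadingSub, Matrix.submatrix_apply, Matrix.mul_apply]
  rw [← Finset.sum_subset (Finset.subset_univ
      ((Finset.univ : Finset (Fin (p.val + 1))).map
        ⟨Fin.castLE p.isLt, Fin.castLE_injective _⟩))]
  · rw [Finset.sum_map]
    rfl
  · intro a _ ha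
    simp only [Finset.mem_map, Finset.mem_univ, true_and, Function.Embedding.coeFn_mk] at ha
    have hpa : (p : ℕ) < (a : ℕ) := by
      by_contra hc
      push_neg at hc
      exact ha ⟨⟨a.val, by omega⟩, by ext; simp⟩
    have : (Fin.castLE p.isLt j) < a := by
      rw [Fin.lt_def]
      simp only [Fin.coe_castLE]
      omega
    rw [hB _ _ this, mul_zero]

end aux

/-- In a Gauss decomposition `T = F·K·E` of a matrix over a (noncommutative) ring,
with `F` lower unitriangular, `K` diagonal with invertible entries, `E` upper
unitriangular, and all leading principal submatrices of `T` invertible, the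
diagonal entries satisfy `k_p = ([T_{p,p}⁻¹]_{p,p})⁻¹`, i.e. `k_p` is the
two-sided inverse of the `(p,p)` entry of the inverse of the `p`-th leading
principal submatrix. -/
theorem gauss_diagonal_entry {R : Type*} [Ring R] {N : ℕ}
    (T F K E : Matrix (Fin N) (Fin N) R)
    (hT : T = F * K * E)
    (hFdiag : ∀ i : Fin N, F i i = 1) (hFupper : ∀ i j : Fin N, i < j → F i j = 0)
    (hKdiag : ∀ i j : Fin N, i ≠ j → K i j = 0) (hKunit : ∀ i : Fin N, IsUnit (K i i))
    (hEdiag : ∀ i : Fin N, E i i = 1) (hElower : ∀ i j : Fin N, j < i → E i j = 0)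
    (hsub : ∀ p : Fin N, IsUnit (leadingSub T p)) :
    ∀ p : Fin N,
      K p p * (Ring.inverse (leadingSub T p)) (Fin.last p.val) (Fin.last p.val) = 1 ∧
      (Ring.inverse (leadingSub T p)) (Fin.last p.val) (Fin.last p.val) * K p p = 1 := by
  intro p
  set c : Fin (p.val + 1) → Fin N := Fin.castLE p.isLt with hc
  have hcast : c (Fin.last p.val) = p := by ext; simp [hc]
  set F' := leadingSub F p with hF'
  set K' := leadingSub K p with hK'
  set E' := leadingSub E p with hE'
  set lst := Fin.last p.val with hlst
  -- entry facts about submatrices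
  have hF'diag : ∀ i, F' i i = 1 := fun i => hFdiag _
  have hmono : ∀ {i j : Fin (p.val + 1)}, i < j →
      Fin.castLE p.isLt i < Fin.castLE p.isLt j := by
    intro i j h
    simp only [Fin.lt_def, Fin.coe_castLE] at h ⊢
    exact h
  have hF'upper : ∀ i j : Fin (p.val + 1), i < j → F' i j = 0 := by
    intro i j h
    exact hFupper _ _ (hmono h)
  have hE'diag : ∀ i, E' i i = 1 := fun i => hEdiag _
  have hE'lower : ∀ i j : Fin (p.val + 1), j < i → E' i j = 0 := by
    intro i j h
    exact hElower _ _ (hmono h)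
  have hK'diag : ∀ i j : Fin (p.val + 1), i ≠ j → K' i j = 0 := by
    intro i j h
    exact hKdiag _ _ (fun e => h (Fin.castLE_injective _ e))
  -- factorization of the leading submatrix
  have hKE : ∀ a j : Fin N, j < a → (K * E) a j = 0 := by
    intro a j h
    rw [Matrix.mul_apply]
    apply Finset.sum_eq_zero
    intro b _
    by_cases hb : a = b
    · subst hb; rw [hElower a j h, mul_zero]
    · rw [hKdiag a b hb, zero_mul]
  have hfact : leadingSub T p = F' * (K' * E') := by
    rw [hT, mul_assoc, leadingSub_mul F (K * E) p hKE, leadingSub_mul K E p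
      (fun a j h => hElower a j h)]
  -- units
  have hF'unit : IsUnit F' := isUnit_lower_unitriangular F' hF'diag hF'upper
  have hE'unit : IsUnit E' := isUnit_upper_unitriangular E' hE'diag hE'lower
  set A := Ring.inverse (leadingSub T p) with hA
  have hA1 : leadingSub T p * A = 1 := Ring.mul_inverse_cancel _ (hsub p)
  have hA2 : A * leadingSub T p = 1 := Ring.inverse_mul_cancel _ (hsub p)
  set iF := Ring.inverse F' with hiF
  set iE := Ring.inverse E' with hiE
  have hiF1 : iF * F' = 1 := Ring.inverse_mul_cancel _ hF'unit
  have hiF2 : F' * iF = 1 := Ring.mul_inverse_cancel _ hF'unit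
  have hiE1 : iE * E' = 1 := Ring.inverse_mul_cancel _ hE'unit
  have hiE2 : E' * iE = 1 := Ring.mul_inverse_cancel _ hE'unit
  -- last-row/column structure
  have hne_lt : ∀ k : Fin (p.val + 1), k ≠ lst → k < lst := by
    intro k hk
    exact lt_of_le_of_ne (Fin.le_last k) hk
  -- (iF) lst lst = 1
  have hiF_last : iF lst lst = 1 := by
    have := congrArg (fun M => M lst lst) hiF1
    simp only [Matrix.mul_apply, Matrix.one_apply_eq] at this
    rw [Finset.sum_eq_single lst] at this
    · rw [hF'diag, mul_one] at this
      exact this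
    · intro k _ hk
      rw [hF'upper k lst (hne_lt k hk), mul_zero]
    · intro h; exact absurd (Finset.mem_univ lst) h
  -- (iE) lst lst = 1
  have hiE_last : iE lst lst = 1 := by
    have := congrArg (fun M => M lst lst) hiE2
    simp only [Matrix.mul_apply, Matrix.one_apply_eq] at this
    rw [Finset.sum_eq_single lst] at this
    · rw [hE'diag, one_mul] at this
      exact this
    · intro k _ hk
      rw [hE'lower lst k (hne_lt k hk), zero_mul]
    · intro h; exact absurd (Finset.mem_univ lst) h
  -- K' * (E' * A) = iF
  have key1 : K' * (E' * A) = iF := by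
    have h1 : F' * (K' * (E' * A)) = 1 := by
      have h0 := hA1
      rw [hfact] at h0
      calc F' * (K' * (E' * A)) = F' * (K' * E') * A := by
            simp only [mul_assoc]
      _ = 1 := h0
    calc K' * (E' * A) = (iF * F') * (K' * (E' * A)) := by rw [hiF1, one_mul]
    _ = iF * (F' * (K' * (E' * A))) := by rw [mul_assoc]
    _ = iF := by rw [h1, mul_one]
  -- (A * F') * K' = iE
  have key2 : (A * F') * K' = iE := by
    have h2 : ((A * F') * K') * E' = 1 := by
      have h0 := hA2
      rw [hfact] at h0
      calc ((A * F') * K') * E' = A * (F' * (K' * E')) := by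
            simp only [mul_assoc]
      _ = 1 := h0
    calc (A * F') * K' = ((A * F') * K') * (E' * iE) := by rw [hiE2, mul_one]
    _ = (((A * F') * K') * E') * iE := by simp only [mul_assoc]
    _ = iE := by rw [h2, one_mul]
  -- extract entries
  have hKpp : K' lst lst = K p p := by rw [hK', leadingSub, Matrix.submatrix_apply]; rw [show Fin.castLE p.isLt lst = p from hcast]
  have hEA : (E' * A) lst lst = A lst lst := by
    rw [Matrix.mul_apply, Finset.sum_eq_single lst]
    · rw [hE'diag, one_mul]
    · intro k _ hk
      rw [hE'lower lst k (hne_lt k hk), zero_mul]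
    · intro h; exact absurd (Finset.mem_univ lst) h
  have hAF : (A * F') lst lst = A lst lst := by
    rw [Matrix.mul_apply, Finset.sum_eq_single lst]
    · rw [hF'diag, mul_one]
    · intro k _ hk
      rw [hF'upper k lst (hne_lt k hk), mul_zero]
    · intro h; exact absurd (Finset.mem_univ lst) h
  constructor
  · have := congrArg (fun M => M lst lst) key1
    simp only [Matrix.mul_apply] at this
    rw [Finset.sum_eq_single lst] at this
    · rw [← Matrix.mul_apply, hEA, hKpp] at this
      rw [this, hiF_last]
    · intro k _ hk
      rw [hK'diag lst k (Ne.symm hk), zero_mul]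
    · intro h; exact absurd (Finset.mem_univ lst) h
  · have := congrArg (fun M => M lst lst) key2
    simp only [Matrix.mul_apply] at this
    rw [Finset.sum_eq_single lst] at this
    · rw [← Matrix.mul_apply] at this
      rw [hAF, hKpp] at this
      rw [this, hiE_last]
    · intro k _ hk
      rw [hK'diag k lst hk, mul_zero]
    · intro h; exact absurd (Finset.mem_univ lst) h
end

section
/- The finite-dimensional module W_m(u) = span{w₀,…,w_m} over the level-zero Yangian double DY_ħ(sl₂), with actions e_k·w_i = (u+(m/2−i+1/2)ħ)^k(m−i+1)w_{i−1}, f_k·w_i = (u+(m/2−i−1/2)ħ)^k(i+1)w_{i+1}, h_k·w_i = [(u+(m/2−i−1/2)ħ)^k(i+1)(m−i) − (u+(m/2−i+1/2)ħ)^k·i(m−i+1)]w_i (with w_{−1} = w_{m+1} = 0), satisfies the level-zero relations [h_k,h_l] = 0, [e_k,f_l] = h_{k+l}, [h₀,e_l] = 2e_l, [h₀,f_l] = −2f_l, [h_{k+1},e_l] − [h_k,e_{l+1}] = ħ(h_k e_l + e_l h_k), [h_{k+1},f_l] − [h_k,f_{l+1}] = −ħ(h_k f_l + f_l h_k), [e_{k+1},e_l]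 − [e_k,e_{l+1}] = ħ(e_k e_l + e_l e_k), and [f_{k+1},f_l] − [f_k,f_{l+1}] = −ħ(f_k f_l + f_l f_k), for all k,l ∈ ℤ. -/
open Matrix

variable (K : Type*) [Field K]

/-- The matrix of `e_k` on the spin-`m/2` evaluation module `W_m(u)` of the
level-zero Yangian double `DY_ħ(sl₂)`:
`e_k·w_i = (u+(m/2−i+1/2)hbar)^k (m−i+1) w_{i−1}` (row `j = i−1`, column `i`). -/
noncomputable def Esl2 (m : ℕ) (hbar u : K) (k : ℤ) :
    Matrix (Fin (m + 1)) (Fin (m + 1)) K :=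
  Matrix.of fun j i =>
    if (j : ℕ) + 1 = (i : ℕ) then
      (u + ((m : K) / 2 - (i : ℕ) + 1 / 2) * hbar) ^ k * ((m : K) - (i : ℕ) + 1)
    else 0

/-- The matrix of `f_k` on `W_m(u)`:
`f_k·w_i = (u+(m/2−i−1/2)hbar)^k (i+1) w_{i+1}` (row `j = i+1`, column `i`). -/
noncomputable def Fsl2 (m : ℕ) (hbar u : K) (k : ℤ) :
    Matrix (Fin (m + 1)) (Fin (m + 1)) K :=
  Matrix.of fun j i =>
    if (j : ℕ) = (i : ℕ) + 1 then
      (u + ((m : K) / 2 - (i : ℕ) - 1 / 2) * hbar) ^ k * (((i : ℕ) : K) + 1)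
    else 0

/-- The matrix of `h_k` on `W_m(u)`:
`h_k·w_i = [(u+(m/2−i−1/2)hbar)^k (i+1)(m−i) − (u+(m/2−i+1/2)hbar)^k i(m−i+1)] w_i`. -/
noncomputable def Hsl2 (m : ℕ) (hbar u : K) (k : ℤ) :
    Matrix (Fin (m + 1)) (Fin (m + 1)) K :=
  Matrix.of fun j i =>
    if j = i then
      (u + ((m : K) / 2 - (i : ℕ) - 1 / 2) * hbar) ^ k *
          ((((i : ℕ) : K) + 1) * ((m : K) - (i : ℕ))) -
        (u + ((m : K) / 2 - (i : ℕ) + 1 / 2) * hbar) ^ k *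
          (((i : ℕ) : K) * ((m : K) - (i : ℕ) + 1))
    else 0

variable {K}

lemma sum_ite_fin {n : ℕ} (t : ℕ) (f : Fin n → K) :
    (∑ p : Fin n, if (p : ℕ) = t then f p else 0) =
      if h : t < n then f ⟨t, h⟩ else 0 := by
  split_ifs with h
  · rw [Finset.sum_eq_single (⟨t, h⟩ : Fin n)]
    · simp
    · intro p _ hp; rw [if_neg]; exact fun he => hp (Fin.ext he)
    · simp
  · apply Finset.sum_eq_zero; intro p _
    rw [if_neg]; exact fun he => h (he ▸ p.isLt)

lemma sum_ite_fin' {n : ℕ} (t : ℕ) (f : Fin n → K) :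
    (∑ p : Fin n, if (p : ℕ) + 1 = t then f p else 0) =
      if h : t - 1 < n ∧ 1 ≤ t then f ⟨t - 1, h.1⟩ else 0 := by
  split_ifs with h
  · rw [Finset.sum_eq_single (⟨t - 1, h.1⟩ : Fin n)]
    · rw [if_pos]; simp only [Fin.val_mk]; omega
    · intro p _ hp; rw [if_neg]; intro he
      exact hp (Fin.ext (by simp only [Fin.val_mk]; omega))
    · simp
  · apply Finset.sum_eq_zero; intro p _
    rw [if_neg]; intro he; exact h (by omega)

lemma conv1 [CharZero K] (u w a b : K) :
    u + (a / 2 - b + 1 / 2) * (2 * w) = u + (a - 2 * b + 1) * w := by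
  have h12 : (2 : K) * 2⁻¹ = 1 := mul_inv_cancel₀ two_ne_zero
  linear_combination w * (a + 1) * h12

lemma conv2 [CharZero K] (u w a b : K) :
    u + (a / 2 - b - 1 / 2) * (2 * w) = u + (a - 2 * b - 1) * w := by
  have h12 : (2 : K) * 2⁻¹ = 1 := mul_inv_cancel₀ two_ne_zero
  linear_combination w * (a - 1) * h12

lemma Hsl2_eq_diagonal (m : ℕ) (hbar u : K) (k : ℤ) :
    Hsl2 K m hbar u k = Matrix.diagonal (fun i : Fin (m + 1) =>
      (u + ((m : K) / 2 - (i : ℕ) - 1 / 2) * hbar) ^ k *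
          ((((i : ℕ) : K) + 1) * ((m : K) - (i : ℕ))) -
        (u + ((m : K) / 2 - (i : ℕ) + 1 / 2) * hbar) ^ k *
          (((i : ℕ) : K) * ((m : K) - (i : ℕ) + 1))) := by
  ext j i
  rw [Hsl2, Matrix.of_apply, Matrix.diagonal]
  by_cases h : j = i
  · subst h; simp
  · simp [h, Ne.symm h]

lemma EF_apply (m : ℕ) (hbar u : K) (k l : ℤ) (j i : Fin (m + 1)) :
    (Esl2 K m hbar u k * Fsl2 K m hbar u l) j i =
      if (j : ℕ) = (i : ℕ) ∧ (i : ℕ) < m then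
        ((u + ((m : K) / 2 - (((i : ℕ) : K) + 1) + 1 / 2) * hbar) ^ k *
            ((m : K) - (((i : ℕ) : K) + 1) + 1)) *
          ((u + ((m : K) / 2 - ((i : ℕ) : K) - 1 / 2) * hbar) ^ l * (((i : ℕ) : K) + 1))
      else 0 := by
  rw [Matrix.mul_apply]
  simp only [Esl2, Fsl2, Matrix.of_apply, mul_ite, mul_zero]
  rw [sum_ite_fin]
  by_cases him : (i : ℕ) < m
  · rw [dif_pos (by omega : (i : ℕ) + 1 < m + 1)]
    simp only [Fin.val_mk]
    by_cases hji : (j : ℕ) = (i : ℕ)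
    · rw [if_pos (by omega), if_pos ⟨hji, him⟩]
      push_cast
      ring
    · rw [if_neg (by omega), zero_mul, if_neg (by tauto)]
  · rw [dif_neg (by omega), if_neg (by tauto)]

lemma FE_apply (m : ℕ) (hbar u : K) (k l : ℤ) (j i : Fin (m + 1)) :
    (Fsl2 K m hbar u l * Esl2 K m hbar u k) j i =
      if (j : ℕ) = (i : ℕ) ∧ 0 < (i : ℕ) then
        ((u + ((m : K) / 2 - (((i : ℕ) : K) - 1) - 1 / 2) * hbar) ^ l *
            ((((i : ℕ) : K) - 1) + 1)) *
          ((u + ((m : K) / 2 - ((i : ℕ) : K) + 1 / 2) * hbar) ^ k *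
            ((m : K) - ((i : ℕ) : K) + 1))
      else 0 := by
  rw [Matrix.mul_apply]
  simp only [Esl2, Fsl2, Matrix.of_apply, mul_ite, mul_zero]
  rw [sum_ite_fin']
  by_cases hi : 0 < (i : ℕ)
  · rw [dif_pos ⟨by omega, by omega⟩]
    simp only [Fin.val_mk]
    by_cases hji : (j : ℕ) = (i : ℕ)
    · rw [if_pos (by omega), if_pos ⟨hji, hi⟩]
      push_cast [Nat.cast_sub (by omega : 1 ≤ (i : ℕ))]
      ring
    · rw [if_neg (by omega), zero_mul, if_neg (by tauto)]
  · rw [dif_neg (by omega), if_neg (by tauto)]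

lemma EE_apply (m : ℕ) (hbar u : K) (k l : ℤ) (j i : Fin (m + 1)) :
    (Esl2 K m hbar u k * Esl2 K m hbar u l) j i =
      if (j : ℕ) + 2 = (i : ℕ) then
        ((u + ((m : K) / 2 - (((i : ℕ) : K) - 1) + 1 / 2) * hbar) ^ k *
            ((m : K) - (((i : ℕ) : K) - 1) + 1)) *
          ((u + ((m : K) / 2 - ((i : ℕ) : K) + 1 / 2) * hbar) ^ l *
            ((m : K) - ((i : ℕ) : K) + 1))
      else 0 := by
  rw [Matrix.mul_apply]
  simp only [Esl2, Matrix.of_apply, mul_ite, mul_zero]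
  rw [sum_ite_fin']
  by_cases hi : 0 < (i : ℕ)
  · rw [dif_pos ⟨by omega, by omega⟩]
    simp only [Fin.val_mk]
    by_cases hji : (j : ℕ) + 2 = (i : ℕ)
    · rw [if_pos (by omega), if_pos hji]
      push_cast [Nat.cast_sub (by omega : 1 ≤ (i : ℕ))]
      ring
    · rw [if_neg (by omega), zero_mul, if_neg hji]
  · rw [dif_neg (by omega), if_neg (by omega)]

lemma FF_apply (m : ℕ) (hbar u : K) (k l : ℤ) (j i : Fin (m + 1)) :
    (Fsl2 K m hbar u k * Fsl2 K m hbar u l) j i =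
      if (j : ℕ) = (i : ℕ) + 2 then
        ((u + ((m : K) / 2 - (((i : ℕ) : K) + 1) - 1 / 2) * hbar) ^ k *
            ((((i : ℕ) : K) + 1) + 1)) *
          ((u + ((m : K) / 2 - ((i : ℕ) : K) - 1 / 2) * hbar) ^ l * (((i : ℕ) : K) + 1))
      else 0 := by
  rw [Matrix.mul_apply]
  simp only [Fsl2, Matrix.of_apply, mul_ite, mul_zero]
  rw [sum_ite_fin]
  by_cases him : (i : ℕ) + 1 < m + 1
  · rw [dif_pos him]
    simp only [Fin.val_mk]
    by_cases hji : (j : ℕ) = (i : ℕ) + 2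
    · rw [if_pos (by omega), if_pos hji]
      push_cast
      ring
    · rw [if_neg (by omega), zero_mul, if_neg hji]
  · rw [dif_neg him, if_neg (by omega)]


variable (K)

set_option maxHeartbeats 2000000 in
/-- The operators `e_k, f_k, h_k` on the `(m+1)`-dimensional module `W_m(u)`
satisfy the level-zero relations of the Yangian double `DY_ħ(sl₂)`. -/
theorem Wm_evaluation_module_relations [CharZero K] (m : ℕ) (hm : 0 < m)
    (hbar u : K)
    (hα : ∀ i : Fin (m + 1), u + ((m : K) / 2 - (i : ℕ) + 1 / 2) * hbar ≠ 0)
    (hβ : ∀ i : Fin (m + 1), u + ((m : K) / 2 - (i : ℕ) - 1 / 2) * hbar ≠ 0) :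
    ∀ k l : ℤ,
      Hsl2 K m hbar u k * Hsl2 K m hbar u l = Hsl2 K m hbar u l * Hsl2 K m hbar u k ∧
      Esl2 K m hbar u k * Fsl2 K m hbar u l - Fsl2 K m hbar u l * Esl2 K m hbar u k =
        Hsl2 K m hbar u (k + l) ∧
      Hsl2 K m hbar u 0 * Esl2 K m hbar u l - Esl2 K m hbar u l * Hsl2 K m hbar u 0 =
        (2 : K) • Esl2 K m hbar u l ∧
      Hsl2 K m hbar u 0 * Fsl2 K m hbar u l - Fsl2 K m hbar u l * Hsl2 K m hbar u 0 =
        (-2 : K) • Fsl2 K m hbar u l ∧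
      (Hsl2 K m hbar u (k + 1) * Esl2 K m hbar u l -
          Esl2 K m hbar u l * Hsl2 K m hbar u (k + 1)) -
        (Hsl2 K m hbar u k * Esl2 K m hbar u (l + 1) -
          Esl2 K m hbar u (l + 1) * Hsl2 K m hbar u k) =
        hbar • (Hsl2 K m hbar u k * Esl2 K m hbar u l +
          Esl2 K m hbar u l * Hsl2 K m hbar u k) ∧
      (Hsl2 K m hbar u (k + 1) * Fsl2 K m hbar u l -
          Fsl2 K m hbar u l * Hsl2 K m hbar u (k + 1)) -
        (Hsl2 K m hbar u k * Fsl2 K m hbar u (l + 1) -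
          Fsl2 K m hbar u (l + 1) * Hsl2 K m hbar u k) =
        (-hbar) • (Hsl2 K m hbar u k * Fsl2 K m hbar u l +
          Fsl2 K m hbar u l * Hsl2 K m hbar u k) ∧
      (Esl2 K m hbar u (k + 1) * Esl2 K m hbar u l -
          Esl2 K m hbar u l * Esl2 K m hbar u (k + 1)) -
        (Esl2 K m hbar u k * Esl2 K m hbar u (l + 1) -
          Esl2 K m hbar u (l + 1) * Esl2 K m hbar u k) =
        hbar • (Esl2 K m hbar u k * Esl2 K m hbar u l +
          Esl2 K m hbar u l * Esl2 K m hbar u k) ∧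
      (Fsl2 K m hbar u (k + 1) * Fsl2 K m hbar u l -
          Fsl2 K m hbar u l * Fsl2 K m hbar u (k + 1)) -
        (Fsl2 K m hbar u k * Fsl2 K m hbar u (l + 1) -
          Fsl2 K m hbar u (l + 1) * Fsl2 K m hbar u k) =
        (-hbar) • (Fsl2 K m hbar u k * Fsl2 K m hbar u l +
          Fsl2 K m hbar u l * Fsl2 K m hbar u k) := by

  obtain ⟨w, rfl⟩ : ∃ w, hbar = 2 * w := ⟨hbar / 2, by field_simp⟩
  have hα' : ∀ i : Fin (m + 1), u + ((m : K) - 2 * ((i : ℕ) : K) + 1) * w ≠ 0 := by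
    intro i; have h := hα i; rwa [conv1] at h
  have hβ' : ∀ i : Fin (m + 1), u + ((m : K) - 2 * ((i : ℕ) : K) - 1) * w ≠ 0 := by
    intro i; have h := hβ i; rwa [conv2] at h
  intro k l
  refine ⟨?_, ?_, ?_, ?_, ?_, ?_, ?_, ?_⟩
  · -- [h_k, h_l] = 0
    simp only [Hsl2_eq_diagonal, Matrix.diagonal_mul_diagonal]
    congr 1
    funext i
    simp [mul_comm]
  · -- [e_k, f_l] = h_{k+l}
    ext j i
    rw [Matrix.sub_apply, EF_apply, FE_apply, Hsl2, Matrix.of_apply]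
    by_cases hji : j = i
    · subst hji
      rw [if_pos rfl]
      simp only [conv1, conv2]
      rw [show u + ((m : K) - 2 * (((j : ℕ) : K) + 1) + 1) * w
            = u + ((m : K) - 2 * ((j : ℕ) : K) - 1) * w from by ring,
          show u + ((m : K) - 2 * (((j : ℕ) : K) - 1) - 1) * w
            = u + ((m : K) - 2 * ((j : ℕ) : K) + 1) * w from by ring,
          zpow_add₀ (hβ' j), zpow_add₀ (hα' j)]
      simp only [eq_self_iff_true, true_and]
      split_ifs with h1 h2 h2
      · ring
      · have hi0 : ((j : ℕ) : K) = 0 := by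
          have : (j : ℕ) = 0 := by omega
          simp [this]
        rw [hi0]; ring
      · have him : ((j : ℕ) : K) = (m : K) := by
          have : (j : ℕ) = m := by omega
          simp [this]
        rw [him]; ring
      · exfalso; omega
    · rw [if_neg hji, if_neg (fun h => hji (Fin.ext h.1)),
          if_neg (fun h => hji (Fin.ext h.1))]
      ring
  · -- [h_0, e_l] = 2 e_l
    ext j i
    rw [Matrix.sub_apply, Matrix.smul_apply, Hsl2_eq_diagonal,
        Matrix.diagonal_mul, Matrix.mul_diagonal]
    simp only [Esl2, Matrix.of_apply, zpow_zero, one_mul, smul_eq_mul]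
    by_cases hji : (j : ℕ) + 1 = (i : ℕ)
    · simp only [if_pos hji]
      have hji' : ((j : ℕ) : K) = ((i : ℕ) : K) - 1 := by
        have : ((j : ℕ) : K) + 1 = ((i : ℕ) : K) := by exact_mod_cast congrArg (Nat.cast : ℕ → K) hji
        linear_combination this
      rw [hji']
      ring
    · simp only [if_neg hji]
      ring
  · -- [h_0, f_l] = -2 f_l
    ext j i
    rw [Matrix.sub_apply, Matrix.smul_apply, Hsl2_eq_diagonal,
        Matrix.diagonal_mul, Matrix.mul_diagonal]
    simp only [Fsl2, Matrix.of_apply, zpow_zero, one_mul, smul_eq_mul]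
    by_cases hji : (j : ℕ) = (i : ℕ) + 1
    · simp only [if_pos hji]
      have hji' : ((j : ℕ) : K) = ((i : ℕ) : K) + 1 := by
        exact_mod_cast congrArg (Nat.cast : ℕ → K) hji
      rw [hji']
      ring
    · simp only [if_neg hji]
      ring
  · -- [h_{k+1}, e_l] - [h_k, e_{l+1}] = hbar (h_k e_l + e_l h_k)
    ext j i
    simp only [Matrix.sub_apply, Matrix.add_apply, Matrix.smul_apply, smul_eq_mul,
      Hsl2_eq_diagonal, Matrix.diagonal_mul, Matrix.mul_diagonal, Esl2, Matrix.of_apply]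
    by_cases hji : (j : ℕ) + 1 = (i : ℕ)
    · simp only [if_pos hji]
      simp only [conv1, conv2]
      have hji' : ((j : ℕ) : K) = ((i : ℕ) : K) - 1 := by
        have h1 : ((j : ℕ) : K) + 1 = ((i : ℕ) : K) := by
          exact_mod_cast congrArg (Nat.cast : ℕ → K) hji
        linear_combination h1
      simp only [zpow_add_one₀ (hβ' j), zpow_add_one₀ (hα' j),
        zpow_add_one₀ (hβ' i), zpow_add_one₀ (hα' i)]
      rw [hji']
      ring
    · simp only [if_neg hji]
      ring
  · -- [h_{k+1}, f_l] - [h_k, f_{l+1}] = -hbar (h_k f_l + f_l h_k)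
    ext j i
    simp only [Matrix.sub_apply, Matrix.add_apply, Matrix.smul_apply, smul_eq_mul,
      Hsl2_eq_diagonal, Matrix.diagonal_mul, Matrix.mul_diagonal, Fsl2, Matrix.of_apply]
    by_cases hji : (j : ℕ) = (i : ℕ) + 1
    · simp only [if_pos hji]
      simp only [conv1, conv2]
      have hji' : ((j : ℕ) : K) = ((i : ℕ) : K) + 1 := by
        exact_mod_cast congrArg (Nat.cast : ℕ → K) hji
      simp only [zpow_add_one₀ (hβ' j), zpow_add_one₀ (hα' j),
        zpow_add_one₀ (hβ' i), zpow_add_one₀ (hα' i)]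
      rw [hji']
      ring
    · simp only [if_neg hji]
      ring
  · -- e-e relation
    ext j i
    simp only [Matrix.sub_apply, Matrix.add_apply, Matrix.smul_apply, smul_eq_mul, EE_apply]
    by_cases hji : (j : ℕ) + 2 = (i : ℕ)
    · simp only [if_pos hji]
      simp only [conv1]
      have hY : u + ((m : K) - 2 * (((i : ℕ) : K) - 1) + 1) * w ≠ 0 := by
        have h := hα' ⟨(i : ℕ) - 1, by omega⟩
        simp only [Fin.val_mk] at h
        rwa [Nat.cast_sub (by omega), Nat.cast_one] at h
      simp only [zpow_add_one₀ hY, zpow_add_one₀ (hα' i)]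
      ring
    · simp only [if_neg hji]
      ring
  · -- f-f relation
    ext j i
    simp only [Matrix.sub_apply, Matrix.add_apply, Matrix.smul_apply, smul_eq_mul, FF_apply]
    by_cases hji : (j : ℕ) = (i : ℕ) + 2
    · simp only [if_pos hji]
      simp only [conv2]
      have hZ : u + ((m : K) - 2 * (((i : ℕ) : K) + 1) - 1) * w ≠ 0 := by
        have h := hβ' ⟨(i : ℕ) + 1, by omega⟩
        simp only [Fin.val_mk] at h
        push_cast at h
        exact h
      simp only [zpow_add_one₀ hZ, zpow_add_one₀ (hβ' i)]
      ring
    · simp only [if_neg hji]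
      ring
end

section
/- For the function f_N(u) = Γ(u/(Nħ))·Γ(1+u/(Nħ)) / (Γ(1/N+u/(Nħ))·Γ(1−1/N+u/(Nħ))), the product f(u) = [∏_{i,j=1}^N f_N(u+(i−j)ħ)]·∏_{k=1}^{N−1}(u−kħ)/(u+kħ) equals 1 identically. -/
open Complex

/-- The normalizing function
`f_N(u) = Γ(u/(Nhbar)) Γ(1+u/(Nhbar)) / (Γ(1/N+u/(Nhbar)) Γ(1−1/N+u/(Nhbar)))`. -/
noncomputable def fN (N : ℕ) (hbar u : ℂ) : ℂ :=
  Complex.Gamma (u / (N * hbar)) * Complex.Gamma (1 + u / (N * hbar)) /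
    (Complex.Gamma (1 / N + u / (N * hbar)) *
      Complex.Gamma (1 - 1 / N + u / (N * hbar)))

private lemma telescopeC (g : ℕ → ℂ) (n : ℕ) (hg : ∀ i, i ≤ n → g i ≠ 0) :
    (∏ i ∈ Finset.range n, g (i + 1) / g i) = g n / g 0 := by
  induction n with
  | zero => simp [div_self (hg 0 le_rfl)]
  | succ n ih =>
    rw [Finset.prod_range_succ, ih (fun i hi => hg i (hi.trans n.le_succ))]
    have h0 := hg 0 (by omega)
    have hn := hg n (by omega)
    field_simp

/-- The identity `f(u) ≡ 1` for
`f(u) = [∏_{i,j=1}^N f_N(u+(i−j)hbar)] ∏_{k=1}^{N−1} (u−khbar)/(u+khbar)`,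
valid whenever `u` avoids the poles of the Gamma factors (guaranteed by `u` not
being an integer multiple of `hbar`). -/
theorem fN_product_identity (N : ℕ) (hN : 2 ≤ N) (hbar u : ℂ)
    (hh : hbar ≠ 0) (hu : ∀ n : ℤ, u ≠ (n : ℂ) * hbar) :
    (∏ i ∈ Finset.range N, ∏ j ∈ Finset.range N,
        fN N hbar (u + ((i : ℂ) - (j : ℂ)) * hbar)) *
      ∏ k ∈ Finset.range (N - 1),
        (u - ((k : ℂ) + 1) * hbar) / (u + ((k : ℂ) + 1) * hbar) = 1 := by
  have hN0 : (N : ℂ) ≠ 0 := Nat.cast_ne_zero.mpr (by omega)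
  have hNh : (N : ℂ) * hbar ≠ 0 := mul_ne_zero hN0 hh
  set c : ℂ := u / ((N : ℂ) * hbar) with hc
  have key : ∀ r m : ℤ, c + (r : ℂ) / (N : ℂ) ≠ (m : ℂ) := by
    intro r m h
    apply hu (m * N - r)
    rw [hc] at h
    field_simp at h
    refine mul_left_cancel₀ hN0 ?_
    push_cast
    linear_combination (N : ℂ) * h
  have keyG : ∀ r : ℤ, Complex.Gamma (c + (r : ℂ) / (N : ℂ)) ≠ 0 := by
    intro r
    apply Complex.Gamma_ne_zero
    intro m h
    exact key r (-m) (by rw [h]; push_cast; ring)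
  have key0 : ∀ r : ℤ, c + (r : ℂ) / (N : ℂ) ≠ 0 := fun r => by
    simpa using key r 0
  have inner : ∀ i ∈ Finset.range N, ∏ j ∈ Finset.range N,
      fN N hbar (u + ((i : ℂ) - (j : ℂ)) * hbar)
      = (u + (i : ℂ) * hbar) / (u + ((i : ℂ) + 1 - N) * hbar) := by
    intro i _
    set G : ℕ → ℂ := fun j => Complex.Gamma (c + ((i : ℂ) + 1 - j) / N) with hG
    set H : ℕ → ℂ := fun j => Complex.Gamma (c + ((i : ℂ) + N - j) / N) with hH
    have hGne : ∀ j, j ≤ N → G j ≠ 0 := by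
      intro j _
      simp only [hG]
      rw [show c + ((i : ℂ) + 1 - j) / N = c + (((i : ℤ) + 1 - j : ℤ) : ℂ) / N by
        push_cast; ring]
      exact keyG _
    have hHne : ∀ j, j ≤ N → H j ≠ 0 := by
      intro j _
      simp only [hH]
      rw [show c + ((i : ℂ) + N - j) / N = c + (((i : ℤ) + N - j : ℤ) : ℂ) / N by
        push_cast; ring]
      exact keyG _
    have step : ∀ j ∈ Finset.range N,
        fN N hbar (u + ((i : ℂ) - (j : ℂ)) * hbar)
        = (G (j + 1) / G j) / (H (j + 1) / H j) := by
      intro j _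
      have e1 : (u + ((i : ℂ) - j) * hbar) / ((N : ℂ) * hbar)
          = c + ((i : ℂ) + 1 - ((j : ℂ) + 1)) / N := by
        rw [hc]; field_simp; ring
      have e2 : 1 + (u + ((i : ℂ) - j) * hbar) / ((N : ℂ) * hbar)
          = c + ((i : ℂ) + N - j) / N := by
        rw [hc]; field_simp; ring
      have e3 : 1 / (N : ℂ) + (u + ((i : ℂ) - j) * hbar) / ((N : ℂ) * hbar)
          = c + ((i : ℂ) + 1 - j) / N := by
        rw [hc]; field_simp; ring
      have e4 : 1 - 1 / (N : ℂ) + (u + ((i : ℂ) - j) * hbar) / ((N : ℂ) * hbar)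
          = c + ((i : ℂ) + N - ((j : ℂ) + 1)) / N := by
        rw [hc]; field_simp; ring
      rw [fN, e2, e3, e4, e1]
      simp only [hG, hH, Nat.cast_add, Nat.cast_one]
      rw [div_eq_mul_inv (_ / _), inv_div, div_mul_div_comm]
    rw [Finset.prod_congr rfl step, Finset.prod_div_distrib,
      telescopeC G N hGne, telescopeC H N hHne]
    have hz : c + ((i : ℂ) + 1 - N) / N ≠ 0 := by
      rw [show c + ((i : ℂ) + 1 - N) / N = c + (((i : ℤ) + 1 - N : ℤ) : ℂ) / N by
        push_cast; ring]
      exact key0 _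
    have hx : c + (i : ℂ) / N ≠ 0 := by
      rw [show c + (i : ℂ) / N = c + (((i : ℤ) : ℤ) : ℂ) / N by push_cast; ring]
      exact key0 _
    have hG0 : G 0 = (c + ((i : ℂ) + 1 - N) / N) * G N := by
      simp only [hG, Nat.cast_zero]
      rw [show c + ((i : ℂ) + 1 - (0 : ℂ)) / N = (c + ((i : ℂ) + 1 - N) / N) + 1 by
        field_simp; ring]
      exact Complex.Gamma_add_one _ hz
    have hH0 : H 0 = (c + (i : ℂ) / N) * H N := by
      simp only [hH, Nat.cast_zero]
      rw [show c + ((i : ℂ) + N - (0 : ℂ)) / N = (c + (i : ℂ) / N) + 1 by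
        field_simp; ring]
      rw [show c + ((i : ℂ) + N - (N : ℂ)) / N = c + (i : ℂ) / N by ring_nf]
      exact Complex.Gamma_add_one _ hx
    have hGN : G N ≠ 0 := hGne N le_rfl
    have hHN : H N ≠ 0 := hHne N le_rfl
    have hden : u + ((i : ℂ) + 1 - N) * hbar ≠ 0 := by
      intro h
      apply hu ((N : ℤ) - 1 - i)
      push_cast
      linear_combination h
    have hB : u + (i : ℂ) * hbar ≠ 0 := by
      intro h
      apply hu (-(i : ℤ))
      push_cast
      linear_combination h
    have ez : c + ((i : ℂ) + 1 - N) / N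
        = (u + ((i : ℂ) + 1 - N) * hbar) / ((N : ℂ) * hbar) := by
      rw [hc]; field_simp
    have ex : c + (i : ℂ) / N = (u + (i : ℂ) * hbar) / ((N : ℂ) * hbar) := by
      rw [hc]; field_simp
    rw [hG0, hH0, ez, ex]
    field_simp
  rw [Finset.prod_congr rfl inner, Finset.prod_div_distrib]
  have hrefl : (∏ i ∈ Finset.range N, (u + ((i : ℂ) + 1 - N) * hbar))
      = ∏ i ∈ Finset.range N, (u - (i : ℂ) * hbar) := by
    rw [← Finset.prod_range_reflect (fun k => u - (k : ℂ) * hbar) N]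
    apply Finset.prod_congr rfl
    intro i hi
    have hi' := Finset.mem_range.mp hi
    have hcast : ((N - 1 - i : ℕ) : ℂ) = (N : ℂ) - 1 - i := by
      rw [Nat.sub_sub, Nat.cast_sub (by omega)]
      push_cast
      ring
    simp only [hcast]
    ring
  rw [hrefl]
  obtain ⟨M, rfl⟩ : ∃ M, N = M + 1 := ⟨N - 1, by omega⟩
  simp only [Nat.add_sub_cancel]
  rw [Finset.prod_range_succ' (fun i => u + (i : ℂ) * hbar) M,
    Finset.prod_range_succ' (fun i => u - (i : ℂ) * hbar) M,
    Finset.prod_div_distrib]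
  have hu0 : u ≠ 0 := by simpa using hu 0
  have hP : (∏ k ∈ Finset.range M, (u + ((k : ℂ) + 1) * hbar)) ≠ 0 := by
    apply Finset.prod_ne_zero_iff.mpr
    intro k _
    intro h
    apply hu (-(k + 1))
    push_cast
    linear_combination h
  have hQ : (∏ k ∈ Finset.range M, (u - ((k : ℂ) + 1) * hbar)) ≠ 0 := by
    apply Finset.prod_ne_zero_iff.mpr
    intro k _
    intro h
    apply hu (k + 1)
    push_cast
    linear_combination h
  push_cast
  simp only [zero_mul, add_zero, sub_zero]
  rw [div_mul_div_comm, div_eq_one_iff_eq (mul_ne_zero (mul_ne_zero hQ hu0) hP)]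
  ring
end
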